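/- arXiv:1605.02366 — 4 statements merged into one kernel-verified Lean document; each statement's English description precedes it below -/
import Mathlib

section
/- Let Γ_4^3 denote cyclic orderings of 3-element subsets of {1,2,3,4} (ordered triples of distinct elements up to cyclic rotation). Define, for each unordered pair α = {i,j} ⊆ [4], the permutation π_α of Γ_4^3 by π_{(ij)}(ijk) = (jil) and π_{(kl)}(ijk) = (ijl) for {i,j,k,l} = [4]. Then the group G generated by all π_α is abelian, every element of G is an involution, and G acts transitively on Γ_4^3. -/
open Equiv Equiv.Perm

/- We model `Γ₄³`, the cyclic orderings `(i j k)` of 3-element subsets of `[4]`, as the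
3-cycles in the permutation group of `Fin 4`: `(i j k)` is the 3-cycle `i ↦ j ↦ k ↦ i`.
Reversal `-(i j k) = (k j i)` corresponds to inversion. -/

/-- The 3-cycle `i ↦ j ↦ k ↦ i` (for distinct `i j k`). -/
def c3 (i j k : Fin 4) : Equiv.Perm (Fin 4) := Equiv.swap i j * Equiv.swap j k

/-- The fourth element of `Fin 4` besides the distinct elements `a b c`
(using `0+1+2+3 = 2` in `Fin 4`). -/
def fourth (a b c : Fin 4) : Fin 4 := 2 - a - b - c

/-- The map `π_{(ab)} : Γ₄³ → Γ₄³`, determined by `π_{(ij)}(ijk) = (jil)` and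
`π_{(kl)}(ijk) = (ijl)` for `{i,j,k,l} = [4]`. If both `a,b` lie in the support of the
3-cycle `γ`, reverse them and swap the third element for the fourth; otherwise exchange
the roles of `a` and `b` (conjugation by `swap a b`). -/
def piAct (a b : Fin 4) : Function.End (Equiv.Perm (Fin 4)) := fun γ =>
  if γ a ≠ a ∧ γ b ≠ b then
    (if γ a = b then c3 b a (fourth a b (γ b)) else c3 a b (fourth a b (γ a)))
  else Equiv.swap a b * γ * Equiv.swap a b

/-- `o_γ(S)`, for `S = {i,j,k}`: the cyclic orientation induced by `γ` on `{i,j,k}`;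
it is `γ` itself if `{i,j,k}` is the support of `γ`, and otherwise is obtained from `γ` by
exchanging the element of the support outside `S` with the element of `S` outside the
support (conjugation by the corresponding transposition). -/
def oFun (γ : Equiv.Perm (Fin 4)) (i j k : Fin 4) : Equiv.Perm (Fin 4) :=
  if γ i = i then Equiv.swap i (fourth i j k) * γ * Equiv.swap i (fourth i j k)
  else if γ j = j then Equiv.swap j (fourth i j k) * γ * Equiv.swap j (fourth i j k)
  else if γ k = k then Equiv.swap k (fourth i j k) * γ * Equiv.swap k (fourth i j k)
  else γ

/-- The generators `π_α` for all 2-element subsets `α ⊆ [4]`. -/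
def piGens : Set (Function.End (Equiv.Perm (Fin 4))) :=
  {f | ∃ a b : Fin 4, a ≠ b ∧ f = piAct a b}

/-! ### Auxiliary lemmas -/

/-- Generators, possibly degenerate (`pg a a = 1`). -/
def pg (a b : Fin 4) : Function.End (Equiv.Perm (Fin 4)) := if a = b then 1 else piAct a b

lemma pg_mem (a b : Fin 4) : pg a b ∈ Submonoid.closure piGens := by
  unfold pg
  split
  · exact Submonoid.one_mem _
  · exact Submonoid.subset_closure ⟨a, b, by assumption, rfl⟩

lemma tc_iff (γ : Equiv.Perm (Fin 4)) : γ.IsThreeCycle ↔ γ.support.card = 3 :=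
  card_support_eq_three_iff.symm

lemma keyA : ∀ a b : Fin 4, a ≠ b → ∀ γ : Equiv.Perm (Fin 4), γ.support.card = 3 →
    (piAct a b γ).support.card = 3 := by decide

lemma keyB : ∀ a b : Fin 4, a ≠ b → ∀ γ : Equiv.Perm (Fin 4), γ.support.card = 3 →
    piAct a b (piAct a b γ) = γ := by decide

lemma keyC : ∀ a b c d : Fin 4, a ≠ b → c ≠ d → ∀ γ : Equiv.Perm (Fin 4), γ.support.card = 3 →
    piAct a b (piAct c d γ) = piAct c d (piAct a b γ) := by decide

lemma keyT : ∀ δ : Equiv.Perm (Fin 4), δ.support.card = 3 →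
    ∃ a b c d e f : Fin 4, pg a b (pg c d (pg e f (c3 0 1 2))) = δ := by decide

/-- Every closure element preserves three-cycles and commutes with each generator
on three-cycles. -/
lemma closure_Q : ∀ g ∈ Submonoid.closure piGens,
    (∀ γ : Equiv.Perm (Fin 4), γ.IsThreeCycle → (g γ).IsThreeCycle) ∧
    (∀ a b : Fin 4, a ≠ b → ∀ γ : Equiv.Perm (Fin 4), γ.IsThreeCycle →
      g (piAct a b γ) = piAct a b (g γ)) := by
  intro g hg
  induction hg using Submonoid.closure_induction with
  | mem f hf =>
    obtain ⟨a, b, hab, rfl⟩ := hf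
    refine ⟨fun γ hγ => ?_, fun c d hcd γ hγ => ?_⟩
    · exact (tc_iff _).2 (keyA a b hab γ ((tc_iff _).1 hγ))
    · exact keyC a b c d hab hcd γ ((tc_iff _).1 hγ)
  | one => exact ⟨fun γ hγ => hγ, fun _ _ _ _ _ => rfl⟩
  | mul x y hx hy ihx ihy =>
    refine ⟨fun γ hγ => ihx.1 _ (ihy.1 _ hγ), fun a b hab γ hγ => ?_⟩
    show x (y (piAct a b γ)) = piAct a b (x (y γ))
    rw [ihy.2 a b hab γ hγ, ihx.2 a b hab _ (ihy.1 _ hγ)]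

lemma closure_tc : ∀ g ∈ Submonoid.closure piGens,
    ∀ γ : Equiv.Perm (Fin 4), γ.IsThreeCycle → (g γ).IsThreeCycle :=
  fun g hg => (closure_Q g hg).1

/-- Any two closure elements commute on three-cycles. -/
lemma closure_comm : ∀ g ∈ Submonoid.closure piGens, ∀ h ∈ Submonoid.closure piGens,
    ∀ γ : Equiv.Perm (Fin 4), γ.IsThreeCycle → g (h γ) = h (g γ) := by
  intro g hg h hh
  induction hh using Submonoid.closure_induction with
  | mem f hf =>
    obtain ⟨a, b, hab, rfl⟩ := hf
    exact fun γ hγ => (closure_Q g hg).2 a b hab γ hγ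
  | one => exact fun _ _ => rfl
  | mul x y hx hy ihx ihy =>
    intro γ hγ
    show g (x (y γ)) = x (y (g γ))
    rw [ihx _ (closure_tc y hy γ hγ), ihy γ hγ]

/-- Every closure element is an involution on three-cycles. -/
lemma closure_invol : ∀ g ∈ Submonoid.closure piGens,
    ∀ γ : Equiv.Perm (Fin 4), γ.IsThreeCycle → g (g γ) = γ := by
  intro g hg
  induction hg using Submonoid.closure_induction with
  | mem f hf =>
    obtain ⟨a, b, hab, rfl⟩ := hf
    exact fun γ hγ => keyB a b hab γ ((tc_iff _).1 hγ)
  | one => exact fun _ _ => rfl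
  | mul x y hx hy ihx ihy =>
    intro γ hγ
    show x (y (x (y γ))) = γ
    rw [closure_comm y hy x hx _ (closure_tc y hy γ hγ), ihy γ hγ, ihx γ hγ]

lemma reach_base : ∀ δ : Equiv.Perm (Fin 4), δ.IsThreeCycle →
    ∃ g ∈ Submonoid.closure piGens, g (c3 0 1 2) = δ := by
  intro δ hδ
  obtain ⟨a, b, c, d, e, f, h⟩ := keyT δ ((tc_iff _).1 hδ)
  exact ⟨pg a b * pg c d * pg e f,
    mul_mem (mul_mem (pg_mem a b) (pg_mem c d)) (pg_mem e f), h⟩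

/-- The group `G` generated by the `π_α` consists of involutions, is abelian, and acts
transitively on `Γ₄³` (the set of 3-cycles in `Perm (Fin 4)`). -/
theorem piGroup_abelian_involutive_transitive :
    (∀ g ∈ Submonoid.closure piGens, ∀ γ : Equiv.Perm (Fin 4),
        γ.IsThreeCycle → g (g γ) = γ) ∧
    (∀ g ∈ Submonoid.closure piGens, ∀ h ∈ Submonoid.closure piGens,
        ∀ γ : Equiv.Perm (Fin 4), γ.IsThreeCycle → g (h γ) = h (g γ)) ∧
    (∀ γ δ : Equiv.Perm (Fin 4), γ.IsThreeCycle → δ.IsThreeCycle →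
        ∃ g ∈ Submonoid.closure piGens, g γ = δ) := by
  refine ⟨closure_invol, closure_comm, fun γ δ hγ hδ => ?_⟩
  have hbase : (c3 0 1 2).IsThreeCycle := (tc_iff _).2 (by decide)
  obtain ⟨g, hg, hgγ⟩ := reach_base γ hγ
  obtain ⟨h, hh, hhδ⟩ := reach_base δ hδ
  refine ⟨h * g, mul_mem hh hg, ?_⟩
  show h (g γ) = δ
  have : g γ = c3 0 1 2 := by rw [← hgγ]; exact closure_invol g hg _ hbase
  rw [this, hhδ]
end

section
/- With the group G acting on Γ_4^3 generated by the involutions π_α as above: fix l ∈ [4], let H_l be the subgroup generated by π_{(il)} for i ∈ [4]\{l}, and let i,j,k be the three elements of [4]\{l}. Let Γ_4^3(ijk) be the set of all γ ∈ Γ_4^3 such that o_γ({i,j,k}) = (ijk). Then Γ_4^3(ijk) has exactly 4 elements and is a single orbit of H_l. -/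
open Equiv Equiv.Perm

/-! Each `π_{(al)}`, `a ≠ l`, maps 3-cycles to 3-cycles, is an involution on them, and does not
change the orientation induced on `{i,j,k} = [4] \ {l}`; hence `H_l` preserves `Γ₄³(ijk)`.
Explicitly `Γ₄³(ijk) = {(ijk), (ijl), (jkl), (kil)}`, and by the rule `π_{(kl)}(ijk) = (ijl)`
(applied to the rotations of `(ijk)`) the generators `π_{(kl)}, π_{(il)}, π_{(jl)}` send `(ijk)` to
the other three elements. So every element is exchanged with `(ijk)` by an element of `H_l`,
and any two are connected through `(ijk)`. -/

-- the `Decidable` instances of the statements over `Fin 4` checked by `decide` below are large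
set_option synthInstance.maxSize 4096

def inducingCycles (i j k l : Fin 4) : Finset (Perm (Fin 4)) :=
  {c3 i j k, c3 i j l, c3 j k l, c3 k i l}

section
variable {a b i j k l : Fin 4} {γ : Perm (Fin 4)}

lemma c3_rotate (hij : i ≠ j) (hik : i ≠ k) : c3 i j k = c3 j k i := by
  revert i j k; decide

lemma piAct_c3_of_notMem (hij : i ≠ j) (hjk : j ≠ k) (hik : i ≠ k)
    (hil : i ≠ l) (hjl : j ≠ l) (hkl : k ≠ l) : piAct k l (c3 i j k) = c3 i j l := by
  unfold piAct; revert i j k l; decide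

lemma isThreeCycle_piAct (hab : a ≠ b) (hγ : γ.IsThreeCycle) : (piAct a b γ).IsThreeCycle := by
  rw [← card_support_eq_three_iff] at hγ ⊢
  unfold piAct; revert a b γ; decide

lemma piAct_piAct (hab : a ≠ b) (hγ : γ.IsThreeCycle) : piAct a b (piAct a b γ) = γ := by
  rw [← card_support_eq_three_iff] at hγ
  unfold piAct; revert a b γ; decide

lemma oFun_piAct (hγ : γ.IsThreeCycle) (hal : a ≠ l) (hij : i ≠ j) (hjk : j ≠ k) (hik : i ≠ k)
    (hil : i ≠ l) (hjl : j ≠ l) (hkl : k ≠ l) : oFun (piAct a l γ) i j k = oFun γ i j k := by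
  rw [← card_support_eq_three_iff] at hγ
  unfold piAct; revert a i j k l γ; decide

lemma mem_inducingCycles_iff (hij : i ≠ j) (hjk : j ≠ k) (hik : i ≠ k)
    (hil : i ≠ l) (hjl : j ≠ l) (hkl : k ≠ l) (γ : Perm (Fin 4)) :
    γ ∈ inducingCycles i j k l ↔ γ.IsThreeCycle ∧ oFun γ i j k = c3 i j k := by
  rw [← card_support_eq_three_iff]
  unfold inducingCycles; revert i j k l γ; decide

lemma card_inducingCycles (hij : i ≠ j) (hil : i ≠ l) (hjl : j ≠ l) (hkl : k ≠ l) :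
    (inducingCycles i j k l).card = 4 := by
  unfold inducingCycles; revert i j k l; decide

lemma eq_or_eq_piAct_of_mem_inducingCycles (hij : i ≠ j) (hjk : j ≠ k) (hik : i ≠ k)
    (hil : i ≠ l) (hjl : j ≠ l) (hkl : k ≠ l) (hγ : γ ∈ inducingCycles i j k l) :
    γ = c3 i j k ∨ ∃ a, a ≠ l ∧ γ = piAct a l (c3 i j k) := by
  simp only [inducingCycles, Finset.mem_insert, Finset.mem_singleton] at hγ
  rcases hγ with rfl | rfl | rfl | rfl
  · exact Or.inl rfl
  · exact Or.inr ⟨k, hkl, (piAct_c3_of_notMem hij hjk hik hil hjl hkl).symm⟩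
  · refine Or.inr ⟨i, hil, ?_⟩
    rw [c3_rotate hij hik, piAct_c3_of_notMem hjk hik.symm hij.symm hjl hkl hil]
  · refine Or.inr ⟨j, hjl, ?_⟩
    rw [← c3_rotate hik.symm hjk.symm, piAct_c3_of_notMem hik.symm hij hjk.symm hkl hil hjl]

end

/-- For `l ∈ [4]` and `{i,j,k} = [4] \ {l}`: the set `Γ₄³(ijk)` of all `γ` with
`o_γ({i,j,k}) = (ijk)` has exactly 4 elements and is a single orbit of the subgroup `H_l`
generated by the `π_{(il)}`, `i ≠ l`. -/
theorem orbit_of_Hl (l i j k : Fin 4)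
    (hij : i ≠ j) (hjk : j ≠ k) (hik : i ≠ k)
    (hil : i ≠ l) (hjl : j ≠ l) (hkl : k ≠ l) :
    let Hl := Submonoid.closure {f : Function.End (Equiv.Perm (Fin 4)) |
      ∃ a : Fin 4, a ≠ l ∧ f = piAct a l}
    let Γijk : Set (Equiv.Perm (Fin 4)) :=
      {γ | γ.IsThreeCycle ∧ oFun γ i j k = c3 i j k}
    Γijk.ncard = 4 ∧
    (∀ γ ∈ Γijk, ∀ g ∈ Hl, g γ ∈ Γijk) ∧
    (∀ γ ∈ Γijk, ∀ δ ∈ Γijk, ∃ g ∈ Hl, g γ = δ) := by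
  intro Hl Γijk
  have mem_iff := mem_inducingCycles_iff hij hjk hik hil hjl hkl
  have hΓ : Γijk = inducingCycles i j k l := Set.ext fun γ => (mem_iff γ).symm
  have gen_mem : ∀ a, a ≠ l → piAct a l ∈ Hl := fun a ha => Submonoid.subset_closure ⟨a, ha, rfl⟩
  have exchange : ∀ γ ∈ Γijk, ∃ g ∈ Hl, g γ = c3 i j k ∧ g (c3 i j k) = γ := by
    intro γ hγ
    have hbase := ((mem_iff (c3 i j k)).1 (by simp [inducingCycles])).1
    rcases eq_or_eq_piAct_of_mem_inducingCycles hij hjk hik hil hjl hkl (hΓ ▸ hγ) with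
      rfl | ⟨a, ha, rfl⟩
    · exact ⟨1, one_mem _, rfl, rfl⟩
    · exact ⟨piAct a l, gen_mem a ha, piAct_piAct ha hbase, rfl⟩
  refine ⟨by rw [hΓ, Set.ncard_coe_finset, card_inducingCycles hij hil hjl hkl], ?_, ?_⟩
  · intro γ hγ g hg
    induction hg using Submonoid.closure_induction generalizing γ with
    | mem f hf =>
      obtain ⟨a, ha, rfl⟩ := hf
      exact ⟨isThreeCycle_piAct ha hγ.1, (oFun_piAct hγ.1 ha hij hjk hik hil hjl hkl).trans hγ.2⟩
    | one => exact hγ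
    | mul f g _ _ ihf ihg => exact ihf _ (ihg _ hγ)
  · intro γ hγ δ hδ
    obtain ⟨g, hg, hgγ, -⟩ := exchange γ hγ
    obtain ⟨h, hh, -, hhδ⟩ := exchange δ hδ
    exact ⟨h * g, mul_mem hh hg, (congrArg h hgγ).trans hhδ⟩
end

section
/- Let A be a subset of Δ^{m-1} × Δ^{n-1} and T a triangulation of A. Suppose T' results from T by a flip supported on a circuit X = (X^+, X^-), and σ ∈ T but σ ∉ T', with the bipartite graph G(σ) connected. Then σ contains a maximal simplex of T_X^+. -/
open Finset

section Defs

variable {ι V : Type*} [AddCommGroup V] [Module ℝ V]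

/-- `F` is a face of the cell `C` (w.r.t. the point map `p`): the set of points of `C`
minimizing some linear functional. -/
def IsFaceOf (p : ι → V) (C F : Finset ι) : Prop :=
  ∃ φ : V →ₗ[ℝ] ℝ, (↑F : Set ι) = {x | x ∈ C ∧ ∀ y ∈ C, φ (p x) ≤ φ (p y)}

/-- `S` is a polyhedral subdivision of the point set `A` (w.r.t. the point map `p`). -/
def IsSubdivision (p : ι → V) (A : Finset ι) (S : Set (Finset ι)) : Prop :=
  (∀ C ∈ S, C ⊆ A) ∧
  (∀ C ∈ S, ∀ F : Finset ι, IsFaceOf p C F → F ∈ S) ∧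
  (∀ C ∈ S, ∀ C' ∈ S, ∃ F : Finset ι, IsFaceOf p C F ∧ IsFaceOf p C' F ∧
    convexHull ℝ (p '' ↑C) ∩ convexHull ℝ (p '' ↑C') = convexHull ℝ (p '' ↑F)) ∧
  (⋃ C ∈ S, convexHull ℝ (p '' ↑C)) = convexHull ℝ (p '' ↑A)

/-- A triangulation: a subdivision all of whose cells are affinely independent. -/
def IsTriangulation (p : ι → V) (A : Finset ι) (S : Set (Finset ι)) : Prop :=
  IsSubdivision p A S ∧ ∀ C ∈ S, AffineIndependent ℝ (fun x : ↥C => p ↑x)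

/-- `X` is a circuit: affinely dependent, but every proper subset is affinely independent. -/
def IsCircuit (p : ι → V) (X : Finset ι) : Prop :=
  ¬ AffineIndependent ℝ (fun x : ↥X => p ↑x) ∧
  ∀ Y : Finset ι, Y ⊂ X → AffineIndependent ℝ (fun x : ↥Y => p ↑x)

/-- The triangulation `T_X^+` of a circuit `X` with dependence coefficients `w`:
all subsets of `X` not containing `X⁺ = {x ∈ X : w x > 0}`. -/
def Tpos (X : Finset ι) (w : ι → ℝ) : Set (Finset ι) :=
  {σ | σ ⊆ X ∧ ∃ x ∈ X, 0 < w x ∧ x ∉ σ}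

/-- The triangulation `T_X^-` of a circuit `X` with dependence coefficients `w`:
all subsets of `X` not containing `X⁻ = {x ∈ X : w x < 0}`. -/
def Tneg (X : Finset ι) (w : ι → ℝ) : Set (Finset ι) :=
  {σ | σ ⊆ X ∧ ∃ x ∈ X, w x < 0 ∧ x ∉ σ}

end Defs

section Flip

variable {ι : Type*} [DecidableEq ι]

/-- `σ` is a maximal element (under inclusion) of the collection `S`. -/
def MaximalIn (S : Set (Finset ι)) (σ : Finset ι) : Prop :=
  σ ∈ S ∧ ∀ τ ∈ S, σ ⊆ τ → σ = τ

/-- The link of the cell `C` in the triangulation `T`. -/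
def linkIn (T : Set (Finset ι)) (C : Finset ι) : Set (Finset ι) :=
  {C' | C' ∈ T ∧ C ∩ C' = ∅ ∧ C ∪ C' ∈ T}

/-- `T'` is the result of a flip on `T` supported on the circuit `X` (with dependence
coefficients `w`): `T_X^+ ⊆ T`, all maximal simplices of `T_X^+` have the same link `L`
in `T`, and `T'` is obtained by exchanging `T_X^+` for `T_X^-` relative to `L`. -/
def IsFlip (T T' : Set (Finset ι)) (X : Finset ι) (w : ι → ℝ) : Prop :=
  Tpos X w ⊆ T ∧
  ∃ L : Set (Finset ι),
    (∀ σ : Finset ι, MaximalIn (Tpos X w) σ → linkIn T σ = L) ∧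
    T' = T \ {τ | ∃ ρ ∈ L, ∃ σ ∈ Tpos X w, τ = ρ ∪ σ} ∪
         {τ | ∃ ρ ∈ L, ∃ σ ∈ Tneg X w, τ = ρ ∪ σ}

end Flip

/-- Embedding of the vertex set of `Δ^{m-1} × Δ^{n-1}` in `ℝ^m × ℝ^n`. -/
def emb (m n : ℕ) : Fin m × Fin n → (Fin m → ℝ) × (Fin n → ℝ) :=
  fun q => (Pi.single q.1 1, Pi.single q.2 1)

/-- The bipartite subgraph `G(C)` of `K_{m,n}` with edge set corresponding to `C`. -/
def bip {m n : ℕ} (C : Finset (Fin m × Fin n)) : SimpleGraph (Fin m ⊕ Fin n) :=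
  SimpleGraph.fromRel (fun a b =>
    match a, b with
    | Sum.inl i, Sum.inr j => (i, j) ∈ C
    | _, _ => False)

/-!
Write `σ = ρ ∪ σ₀` with `ρ` in the common link and `σ₀ ∈ T_X^+`. Then `σ₀` misses some `a ∈ X⁺`
and, as `σ` is not one of the new simplices, contains all of `X⁻`. The row and column sums of the
dependence vanish, so every row and column of `X` carries both signs: a second element of `X⁺`
keeps `a` out of `ρ`, and the elements of `X⁻` in the row and column of `a` put both endpoints of
the edge `a` into `G(σ)`. If some `e ∈ X \ {a}` were missing from `σ`, then `e ∈ X⁺` and `σ`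
would lie in the simplex `(X \ {e}) ∪ ρ` of `T`, which contains `a`. Writing
`(x, 1) = φ(x.1) - φ(x.2)` for a potential `φ` on `K_{m,n}`, a path in `G(σ)` between the
endpoints of `a` telescopes to express the lifted point `(a, 1)` through the lifted points of `σ`,
contradicting affine independence.
-/

namespace Finset

variable {ι κ M : Type*} [AddCommGroup M] [LinearOrder M] [IsOrderedAddMonoid M]

lemma exists_neg_of_sum_eq_zero {s : Finset ι} {w : ι → M} (h : ∑ x ∈ s, w x = 0)
    {a : ι} (ha : a ∈ s) (hwa : 0 < w a) : ∃ b ∈ s, w b < 0 := by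
  by_contra! hb
  exact (sum_pos' hb ⟨a, ha, hwa⟩).ne' h

lemma exists_neg_mem_fiber {s : Finset ι} {w : ι → M} {f : ι → κ} [DecidableEq κ]
    {a : ι} (h : ∑ x ∈ s with f x = f a, w x = 0) (ha : a ∈ s) (hwa : 0 < w a) :
    ∃ b ∈ s, f b = f a ∧ w b < 0 := by
  obtain ⟨b, hb, hwb⟩ := exists_neg_of_sum_eq_zero h (mem_filter.2 ⟨ha, rfl⟩) hwa
  exact ⟨b, (mem_filter.1 hb).1, (mem_filter.1 hb).2, hwb⟩

lemma exists_pos_mem_fiber {s : Finset ι} {w : ι → M} {f : ι → κ} [DecidableEq κ]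
    {a : ι} (h : ∑ x ∈ s with f x = f a, w x = 0) (ha : a ∈ s) (hwa : w a < 0) :
    ∃ b ∈ s, f b = f a ∧ 0 < w b := by
  obtain ⟨b, hb, hwb⟩ := exists_neg_mem_fiber (w := -w) (by simpa using h) ha
    (neg_pos.2 hwa)
  exact ⟨b, hb, by simpa using hwb⟩

end Finset

lemma SimpleGraph.Reachable.sub_mem {α G : Type*} [AddCommGroup G] {Γ : SimpleGraph α}
    {φ : α → G} {S : AddSubgroup G} (hadj : ∀ a b, Γ.Adj a b → φ a - φ b ∈ S) {u v : α}
    (h : Γ.Reachable u v) : φ u - φ v ∈ S := by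
  obtain ⟨p⟩ := h
  induction p with
  | nil => simp
  | cons hab _ ih => simpa using S.add_mem (hadj _ _ hab) ih

lemma AffineIndependent.linearIndependent_prod_one {k ι V : Type*} [Ring k] [AddCommGroup V]
    [Module k V] {p : ι → V} (hp : AffineIndependent k p) :
    LinearIndependent k (fun i => (p i, (1 : k))) := by
  rw [linearIndependent_iff']
  intro s g hg
  exact hp.eq_zero_of_sum_eq_zero (by simpa [Prod.snd_sum] using congrArg Prod.snd hg)
    (by simpa [Prod.fst_sum] using congrArg Prod.fst hg)

section ProductOfSimplices

open SimpleGraph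

variable {m n : ℕ} {X : Finset (Fin m × Fin n)} {w : Fin m × Fin n → ℝ}

lemma sum_row_eq_zero (hw0 : ∑ x ∈ X, w x • emb m n x = 0) (i : Fin m) :
    ∑ x ∈ X with x.1 = i, w x = 0 := by
  simpa [emb, sum_filter, Prod.fst_sum, Finset.sum_apply, Pi.single_apply, eq_comm] using
    congrArg (fun z => z.1 i) hw0

lemma sum_col_eq_zero (hw0 : ∑ x ∈ X, w x • emb m n x = 0) (j : Fin n) :
    ∑ x ∈ X with x.2 = j, w x = 0 := by
  simpa [emb, sum_filter, Prod.snd_sum, Finset.sum_apply, Pi.single_apply, eq_comm] using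
    congrArg (fun z => z.2 j) hw0

lemma exists_neg_in_row (hw0 : ∑ x ∈ X, w x • emb m n x = 0) {a : Fin m × Fin n} (ha : a ∈ X)
    (hwa : 0 < w a) : ∃ b ∈ X, b.1 = a.1 ∧ w b < 0 :=
  exists_neg_mem_fiber (sum_row_eq_zero hw0 a.1) ha hwa

lemma exists_neg_in_col (hw0 : ∑ x ∈ X, w x • emb m n x = 0) {a : Fin m × Fin n} (ha : a ∈ X)
    (hwa : 0 < w a) : ∃ b ∈ X, b.2 = a.2 ∧ w b < 0 :=
  exists_neg_mem_fiber (sum_col_eq_zero hw0 a.2) ha hwa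

lemma exists_pos_ne_of_pos (hw0 : ∑ x ∈ X, w x • emb m n x = 0) {a : Fin m × Fin n}
    (ha : a ∈ X) (hwa : 0 < w a) : ∃ d ∈ X, 0 < w d ∧ d ≠ a := by
  obtain ⟨c, hcX, hca, hwc⟩ := exists_neg_in_col hw0 ha hwa
  obtain ⟨d, hdX, hdc, hwd⟩ :=
    exists_pos_mem_fiber (sum_row_eq_zero hw0 c.1) hcX hwc
  refine ⟨d, hdX, hwd, ?_⟩
  rintro rfl
  obtain rfl : c = d := Prod.ext hdc.symm hca
  exact hwc.not_gt hwd

@[simp]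
lemma bip_adj_inl_inr {C : Finset (Fin m × Fin n)} {i : Fin m} {j : Fin n} :
    (bip C).Adj (.inl i) (.inr j) ↔ (i, j) ∈ C := by
  simp [bip]

@[simp]
lemma bip_adj_inr_inl {C : Finset (Fin m × Fin n)} {i : Fin m} {j : Fin n} :
    (bip C).Adj (.inr j) (.inl i) ↔ (i, j) ∈ C := by
  simp [bip]

lemma bip_reachable_of_connected {σ : Finset (Fin m × Fin n)}
    (hconn : ((bip σ).induce {v | v ∈ (bip σ).support}).Connected)
    {b c : Fin m × Fin n} (hb : b ∈ σ) (hc : c ∈ σ) :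
    (bip σ).Reachable (.inl b.1) (.inr c.2) :=
  (hconn.preconnected ⟨_, .inr b.2, by simpa using hb⟩ ⟨_, .inl c.1, by simpa using hc⟩).map
    (Embedding.induce _).toHom

noncomputable def bipPotential : Fin m ⊕ Fin n → ((Fin m → ℝ) × (Fin n → ℝ)) × ℝ :=
  Sum.elim (fun i => ((Pi.single i 1, 0), 1 / 2)) (fun j => ((0, -Pi.single j 1), -1 / 2))

lemma bipPotential_sub (x : Fin m × Fin n) :
    bipPotential (.inl x.1) - bipPotential (.inr x.2) = (emb m n x, (1 : ℝ)) := by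
  ext <;> simp [bipPotential, emb]; norm_num

lemma mem_span_of_bip_reachable {C : Finset (Fin m × Fin n)} {a : Fin m × Fin n}
    (h : (bip C).Reachable (.inl a.1) (.inr a.2)) :
    (emb m n a, (1 : ℝ)) ∈ Submodule.span ℝ ((fun x => (emb m n x, (1 : ℝ))) '' C) := by
  rw [← bipPotential_sub]
  refine h.sub_mem (S := (Submodule.span ℝ _).toAddSubgroup) ?_
  have hmem : ∀ x ∈ C, bipPotential (.inl x.1) - bipPotential (.inr x.2) ∈
      Submodule.span ℝ ((fun x => (emb m n x, (1 : ℝ))) '' C) := fun x hx =>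
    bipPotential_sub x ▸ Submodule.subset_span ⟨x, hx, rfl⟩
  rintro (i | j) (i | j) hadj
  · simp [bip] at hadj
  · exact hmem _ (bip_adj_inl_inr.1 hadj)
  · simpa using neg_mem (hmem _ (bip_adj_inr_inl.1 hadj))
  · simp [bip] at hadj

lemma not_bip_reachable_of_affineIndependent {C σ : Finset (Fin m × Fin n)}
    (hC : AffineIndependent ℝ (fun x : ↥C => emb m n ↑x)) (hσC : σ ⊆ C)
    {a : Fin m × Fin n} (haC : a ∈ C) (haσ : a ∉ σ) :
    ¬ (bip σ).Reachable (.inl a.1) (.inr a.2) := by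
  have hli : LinearIndepOn ℝ (fun x => (emb m n x, (1 : ℝ))) ↑C := hC.linearIndependent_prod_one
  exact fun h => (hli.mono (Set.insert_subset haC hσC)).notMem_span_of_insert haσ
    (mem_span_of_bip_reachable h)

end ProductOfSimplices

section Flip

variable {ι : Type*} [DecidableEq ι] {X : Finset ι} {w : ι → ℝ}

lemma maximalIn_tpos_erase {x : ι} (hx : x ∈ X) (hwx : 0 < w x) :
    MaximalIn (Tpos X w) (X.erase x) := by
  refine ⟨⟨erase_subset _ _, x, hx, hwx, notMem_erase _ _⟩, ?_⟩
  rintro τ ⟨hτX, y, hyX, -, hyτ⟩ hsub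
  refine Subset.antisymm hsub fun t ht => mem_erase.2 ⟨?_, hτX ht⟩
  rintro rfl
  exact hyτ (erase_subset_iff_of_mem ht |>.1 hsub hyX)

lemma IsFlip.exists_eq_union_of_removed {T T' : Set (Finset ι)} (hflip : IsFlip T T' X w)
    {σ : Finset ι} (hσT : σ ∈ T) (hσT' : σ ∉ T') :
    ∃ ρ σ₀, (∀ x ∈ X, 0 < w x → ρ ∈ linkIn T (X.erase x)) ∧ σ₀ ∈ Tpos X w ∧
      (∀ y ∈ X, w y < 0 → y ∈ σ₀) ∧ σ = ρ ∪ σ₀ := by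
  obtain ⟨-, L, hL, rfl⟩ := hflip
  obtain ⟨ρ, hρL, σ₀, hσ₀, rfl⟩ : ∃ ρ ∈ L, ∃ σ₀ ∈ Tpos X w, σ = ρ ∪ σ₀ :=
    by_contra fun h => hσT' (Or.inl ⟨hσT, h⟩)
  refine ⟨ρ, σ₀, fun x hx hwx => hL _ (maximalIn_tpos_erase hx hwx) ▸ hρL, hσ₀,
    fun y hyX hwy => by_contra fun hy =>
      hσT' (Or.inr ⟨ρ, hρL, σ₀, ⟨hσ₀.1, y, hyX, hwy, hy⟩, rfl⟩), rfl⟩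

end Flip

theorem flip_removed_simplex_contains_maximal_general {m n : ℕ}
    (A : Finset (Fin m × Fin n)) (T T' : Set (Finset (Fin m × Fin n)))
    (hT : IsTriangulation (emb m n) A T)
    (X : Finset (Fin m × Fin n))
    (w : Fin m × Fin n → ℝ)
    (hw0 : ∑ x ∈ X, w x • emb m n x = 0)
    (hw2 : ∀ x ∈ X, w x ≠ 0)
    (hflip : IsFlip T T' X w)
    (σ : Finset (Fin m × Fin n)) (hσT : σ ∈ T) (hσT' : σ ∉ T')
    (hconn : ((bip σ).induce {v | v ∈ (bip σ).support}).Connected) :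
    ∃ τ : Finset (Fin m × Fin n), MaximalIn (Tpos X w) τ ∧ τ ⊆ σ := by
  obtain ⟨ρ, σ₀, hlink, ⟨hσ₀X, a, haX, hwa, haσ₀⟩, hneg, rfl⟩ :=
    hflip.exists_eq_union_of_removed hσT hσT'
  have haρ : a ∉ ρ := by
    obtain ⟨d, hdX, hwd, hda⟩ := exists_pos_ne_of_pos hw0 haX hwa
    exact disjoint_left.1 (disjoint_iff_inter_eq_empty.2 (hlink d hdX hwd).2.1)
      (mem_erase.2 ⟨hda.symm, haX⟩)
  refine ⟨X.erase a, maximalIn_tpos_erase haX hwa, fun e he => by_contra fun heσ => ?_⟩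
  obtain ⟨hea, heX⟩ := mem_erase.1 he
  have hwe : 0 < w e := (hw2 e heX).lt_or_gt.resolve_left
    fun h => heσ (mem_union_right _ (hneg e heX h))
  have hσC : ρ ∪ σ₀ ⊆ X.erase e ∪ ρ := union_subset subset_union_right fun t ht =>
    mem_union_left _ (mem_erase.2 ⟨fun hte => heσ (hte ▸ mem_union_right _ ht), hσ₀X ht⟩)
  obtain ⟨b, hbX, hba, hwb⟩ := exists_neg_in_row hw0 haX hwa
  obtain ⟨c, hcX, hca, hwc⟩ := exists_neg_in_col hw0 haX hwa
  refine not_bip_reachable_of_affineIndependent (hT.2 _ (hlink e heX hwe).2.2) hσC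
    (mem_union_left _ (mem_erase.2 ⟨Ne.symm hea, haX⟩)) (notMem_union.2 ⟨haρ, haσ₀⟩) ?_
  rw [← hba, ← hca]
  exact bip_reachable_of_connected hconn (mem_union_right _ (hneg b hbX hwb))
    (mem_union_right _ (hneg c hcX hwc))

/-- If `T'` results from `T` by a flip supported on `X`, `σ ∈ T`, `σ ∉ T'`, and `G(σ)` is
connected, then `σ` contains a maximal simplex of `T_X^+`. -/
theorem flip_removed_simplex_contains_maximal {m n : ℕ}
    (A : Finset (Fin m × Fin n)) (T T' : Set (Finset (Fin m × Fin n)))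
    (hT : IsTriangulation (emb m n) A T)
    (X : Finset (Fin m × Fin n)) (hXA : X ⊆ A) (hX : IsCircuit (emb m n) X)
    (w : Fin m × Fin n → ℝ)
    (hw0 : ∑ x ∈ X, w x • emb m n x = 0) (hw1 : ∑ x ∈ X, w x = 0)
    (hw2 : ∀ x ∈ X, w x ≠ 0)
    (hflip : IsFlip T T' X w)
    (σ : Finset (Fin m × Fin n)) (hσT : σ ∈ T) (hσT' : σ ∉ T')
    (hconn : ((bip σ).induce {v | v ∈ (bip σ).support}).Connected) :
    ∃ τ : Finset (Fin m × Fin n), MaximalIn (Tpos X w) τ ∧ τ ⊆ σ :=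
  flip_removed_simplex_contains_maximal_general A T T' hT X w hw0 hw2 hflip σ hσT hσT' hconn
end

section
/- Let T be a triangulation of a subset A of Δ^{m-1} × Δ^{n-1} and let σ ∈ T. Then there exists τ ∈ T with σ ⊆ τ such that every vertex f ∈ Δ^{n-1} that is adjacent in G(A) to a vertex of G(σ) is adjacent in G(τ) to a vertex of G(σ). -/
open Finset

/-! Let `x` be the barycentre of `σ` and `B` the edges of `A` at rows of `σ`. A point `y` of the
hull of `B` close enough to `x` lies only in cells whose hull contains `x`, since the finitely
many hulls missing `x` are closed. Such a cell `τ` contains `σ`: `x` lies in the hull of a common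
face `F ⊆ σ`, and the barycentre of an affinely independent `σ` is in the hull of no proper
subset. Taking `y` slightly off `x` towards the barycentre of `B` gives every column adjacent to
`σ` a positive `f`-coordinate in `y`, hence a vertex `(i, j)` of `τ` of positive weight; the row
`i` then has positive `e`-coordinate in `y ∈ conv B`, so it is a row of `σ`. -/

open Topology Filter

section Subdivision

variable {ι V : Type*} [AddCommGroup V] [Module ℝ V]

theorem Finset.centroid_mem_convexHull_image {s : Finset ι} (hs : s.Nonempty) (p : ι → V) :
    s.centroid ℝ p ∈ convexHull ℝ (p '' s) := by
  rw [s.centroid_eq_centerMass hs]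
  refine s.centerMass_mem_convexHull (fun i _ => ?_) ?_ fun i hi => Set.mem_image_of_mem p hi
  · simp [centroidWeights_apply]
  · simp [hs.card_pos]

theorem subset_of_centroid_mem_convexHull {p : ι → V} {σ F : Finset ι}
    (hσ : AffineIndependent ℝ (fun x : σ => p x)) (hF : F ⊆ σ)
    (h : σ.centroid ℝ p ∈ convexHull ℝ (p '' F)) : σ ⊆ F := by
  intro i hi
  by_contra hiF
  have himage : (fun x : σ => p x) '' {x | ↑x ∈ F} = p '' F := by
    ext v
    simp only [Set.mem_image, Set.mem_ofPred_eq, Subtype.exists, mem_coe]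
    exact ⟨fun ⟨a, _, ha, hv⟩ => ⟨a, ha, hv⟩, fun ⟨a, ha, hv⟩ => ⟨a, hF ha, ha, hv⟩⟩
  rw [← attach_map_val (s := σ), centroid_map, ← univ_eq_attach, centroid_def, ← himage] at h
  have hweight := hσ.eq_zero_of_affineCombination_mem_affineSpan
    (sum_centroidWeights_eq_one_of_nonempty ℝ _ ⟨⟨i, hi⟩, mem_univ _⟩)
    (convexHull_subset_affineSpan _ h) (mem_univ ⟨i, hi⟩) hiF
  simp [centroidWeights_apply, ne_empty_of_mem hi] at hweight

theorem IsFaceOf.subset {p : ι → V} {C F : Finset ι} (h : IsFaceOf p C F) : F ⊆ C := by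
  obtain ⟨φ, hφ⟩ := h
  exact fun x hx => ((Set.ext_iff.1 hφ x).1 hx).1

variable [TopologicalSpace V] [IsTopologicalAddGroup V] [ContinuousSMul ℝ V] [T2Space V]

theorem Set.Finite.eventually_mem_convexHull_imp_mem {S : Set (Finset ι)} (hS : S.Finite)
    (p : ι → V) (x : V) :
    ∀ᶠ y in 𝓝 x, ∀ C ∈ S, y ∈ convexHull ℝ (p '' C) → x ∈ convexHull ℝ (p '' C) := by
  refine (eventually_all_finite hS).2 fun C _ => ?_
  by_cases hx : x ∈ convexHull ℝ (p '' C)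
  · exact Eventually.of_forall fun _ _ => hx
  · filter_upwards [((C.finite_toSet.image p).isClosed_convexHull ℝ).isOpen_compl.mem_nhds hx]
      with y hy hyC using absurd hyC hy

theorem IsTriangulation.eventually_exists_superset {p : ι → V} {A : Finset ι}
    {S : Set (Finset ι)} (hT : IsTriangulation p A S) {σ : Finset ι} (hσ : σ ∈ S) :
    ∀ᶠ y in 𝓝 (σ.centroid ℝ p), y ∈ convexHull ℝ (p '' A) →
      ∃ τ ∈ S, σ ⊆ τ ∧ y ∈ convexHull ℝ (p '' τ) := by
  obtain ⟨⟨hSA, -, hmeet, hcover⟩, hindep⟩ := hT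
  have hS : S.Finite := A.powerset.finite_toSet.subset fun C hC => mem_powerset.2 (hSA C hC)
  filter_upwards [hS.eventually_mem_convexHull_imp_mem p _] with y hy hyA
  rw [← hcover] at hyA
  obtain ⟨τ, hτ, hyτ⟩ := Set.mem_iUnion₂.1 hyA
  refine ⟨τ, hτ, ?_, hyτ⟩
  rcases σ.eq_empty_or_nonempty with rfl | hne
  · exact empty_subset τ
  obtain ⟨F, hFσ, hFτ, hinter⟩ := hmeet σ hσ τ hτ
  have hxF : σ.centroid ℝ p ∈ convexHull ℝ (p '' F) :=
    hinter ▸ ⟨centroid_mem_convexHull_image hne p, hy τ hτ hyτ⟩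
  exact (subset_of_centroid_mem_convexHull (hindep σ hσ) hFσ.subset hxF).trans hFτ.subset

end Subdivision

section ProductOfSimplices

variable {m n : ℕ}

@[simp]
theorem emb_fst_apply (q : Fin m × Fin n) (i : Fin m) :
    (emb m n q).1 i = if q.1 = i then 1 else 0 := by
  simp [emb, Pi.single_apply, eq_comm]

@[simp]
theorem emb_snd_apply (q : Fin m × Fin n) (j : Fin n) :
    (emb m n q).2 j = if q.2 = j then 1 else 0 := by
  simp [emb, Pi.single_apply, eq_comm]

theorem centroid_emb_snd {s : Finset (Fin m × Fin n)} (hs : s.Nonempty) (j : Fin n) :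
    (s.centroid ℝ (emb m n)).2 j = (#s : ℝ)⁻¹ * #{q ∈ s | q.2 = j} := by
  rw [centroid_eq_centerMass _ hs,
    centerMass_eq_of_sum_1 _ _ (sum_centroidWeights_eq_one_of_nonempty ℝ s hs)]
  simp [Prod.snd_sum, Finset.sum_apply, centroidWeights_apply, sum_ite, mul_comm]

theorem centroid_emb_snd_nonneg {s : Finset (Fin m × Fin n)} (hs : s.Nonempty) (j : Fin n) :
    0 ≤ (s.centroid ℝ (emb m n)).2 j := by
  rw [centroid_emb_snd hs]
  positivity

theorem centroid_emb_snd_pos {s : Finset (Fin m × Fin n)} {q : Fin m × Fin n} (hq : q ∈ s) :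
    0 < (s.centroid ℝ (emb m n)).2 q.2 := by
  rw [centroid_emb_snd ⟨q, hq⟩]
  have hcard : 0 < #{q' ∈ s | q'.2 = q.2} := card_pos.2 ⟨q, mem_filter.2 ⟨hq, rfl⟩⟩
  have : 0 < #s := card_pos.2 ⟨q, hq⟩
  positivity

theorem fst_eq_zero_of_mem_convexHull {B : Finset (Fin m × Fin n)}
    {v : (Fin m → ℝ) × (Fin n → ℝ)} (hv : v ∈ convexHull ℝ (emb m n '' B)) {i : Fin m}
    (hi : ∀ q ∈ B, q.1 ≠ i) : v.1 i = 0 := by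
  have hconvex : Convex ℝ {v : (Fin m → ℝ) × (Fin n → ℝ) | v.1 i = 0} :=
    convex_hyperplane (LinearMap.proj i ∘ₗ LinearMap.fst ℝ _ _).isLinear 0
  refine convexHull_min ?_ hconvex hv
  rintro _ ⟨q, hq, rfl⟩
  simp [hi q hq]

theorem exists_mem_snd_eq_of_mem_convexHull {τ : Finset (Fin m × Fin n)}
    {v : (Fin m → ℝ) × (Fin n → ℝ)} (hv : v ∈ convexHull ℝ (emb m n '' τ)) {j : Fin n}
    (hj : 0 < v.2 j) : ∃ q ∈ τ, q.2 = j ∧ 0 < v.1 q.1 := by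
  classical
  rw [← coe_image, mem_convexHull'] at hv
  obtain ⟨w, hw0, -, rfl⟩ := hv
  simp only [Prod.snd_sum, Prod.fst_sum, Finset.sum_apply, Prod.smul_snd, Prod.smul_fst,
    Pi.smul_apply, smul_eq_mul] at hj ⊢
  obtain ⟨_, he, hpos⟩ := exists_lt_of_sum_lt (f := fun _ => (0 : ℝ)) (by simpa using hj)
  obtain ⟨q, hq, rfl⟩ := mem_image.1 he
  obtain rfl : q.2 = j := by
    by_contra h
    simp [h] at hpos
  have hwq : 0 < w (emb m n q) := by simpa using hpos
  refine ⟨q, hq, rfl, hwq.trans_le ?_⟩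
  calc w (emb m n q) = w (emb m n q) * (emb m n q).1 q.1 := by simp
    _ ≤ _ := single_le_sum (f := fun e => w e * e.1 q.1) (fun e he => ?_) he
  obtain ⟨q', -, rfl⟩ := mem_image.1 he
  exact mul_nonneg (hw0 _ he) (by rw [emb_fst_apply]; split_ifs <;> norm_num)

theorem exists_mem_fst_eq_of_mem_convexHull {B τ : Finset (Fin m × Fin n)}
    {v : (Fin m → ℝ) × (Fin n → ℝ)} (hvB : v ∈ convexHull ℝ (emb m n '' B))
    (hvτ : v ∈ convexHull ℝ (emb m n '' τ)) {j : Fin n} (hj : 0 < v.2 j) :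
    ∃ i, (i, j) ∈ τ ∧ ∃ q ∈ B, q.1 = i := by
  obtain ⟨q, hqτ, rfl, hq⟩ := exists_mem_snd_eq_of_mem_convexHull hvτ hj
  by_contra! hrow
  exact hq.ne' (fst_eq_zero_of_mem_convexHull hvB (hrow q.1 hqτ))

end ProductOfSimplices

/-- For any `σ` in a triangulation `T` of `A ⊆ Δ^{m-1} × Δ^{n-1}`, there is `τ ∈ T` with
`σ ⊆ τ` such that every vertex `f_j ∈ Δ^{n-1}` adjacent in `G(A)` to a vertex of `G(σ)` is
adjacent in `G(τ)` to a vertex of `G(σ)`. -/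
theorem grow_simplex {m n : ℕ} (A : Finset (Fin m × Fin n))
    (T : Set (Finset (Fin m × Fin n))) (hT : IsTriangulation (emb m n) A T)
    (σ : Finset (Fin m × Fin n)) (hσ : σ ∈ T) :
    ∃ τ ∈ T, σ ⊆ τ ∧
      ∀ j : Fin n, (∃ i : Fin m, (i, j) ∈ A ∧ ∃ j' : Fin n, (i, j') ∈ σ) →
        ∃ i : Fin m, (i, j) ∈ τ ∧ ∃ j' : Fin n, (i, j') ∈ σ := by
  classical
  rcases σ.eq_empty_or_nonempty with rfl | hne
  · exact ⟨∅, hσ, subset_rfl, by simp⟩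
  set B := {q ∈ A | ∃ j', (q.1, j') ∈ σ}
  have hσB : σ ⊆ B := fun q hq => mem_filter.2 ⟨hT.1.1 σ hσ hq, q.2, hq⟩
  set x := σ.centroid ℝ (emb m n)
  set z := B.centroid ℝ (emb m n)
  have hx : x ∈ convexHull ℝ (emb m n '' B) :=
    convexHull_mono (Set.image_mono hσB) (centroid_mem_convexHull_image hne _)
  have hz : z ∈ convexHull ℝ (emb m n '' B) := centroid_mem_convexHull_image (hne.mono hσB) _
  have hline : Tendsto (AffineMap.lineMap x z) (𝓝[>] (0 : ℝ)) (𝓝 x) :=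
    (AffineMap.lineMap_continuous.tendsto' 0 x (by simp)).mono_left nhdsWithin_le_nhds
  obtain ⟨t, hy, ht0, ht1⟩ :=
    ((hline.eventually (hT.eventually_exists_superset hσ)).and (Ioo_mem_nhdsGT one_pos)).exists
  set y := AffineMap.lineMap x z t
  have hyB : y ∈ convexHull ℝ (emb m n '' B) :=
    (convex_convexHull ℝ _).lineMap_mem hx hz ⟨ht0.le, ht1.le⟩
  obtain ⟨τ, hτ, hστ, hyτ⟩ := hy (convexHull_mono (Set.image_mono (filter_subset _ A)) hyB)
  refine ⟨τ, hτ, hστ, fun j ⟨i, hiA, j', hij'⟩ => ?_⟩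
  have hyj : 0 < y.2 j := by
    have hijB : (i, j) ∈ B := mem_filter.2 ⟨hiA, j', hij'⟩
    simp only [y, AffineMap.lineMap_apply_module, Prod.snd_add, Prod.smul_snd, Pi.add_apply,
      Pi.smul_apply, smul_eq_mul]
    exact add_pos_of_nonneg_of_pos
      (mul_nonneg (sub_nonneg.2 ht1.le) (centroid_emb_snd_nonneg hne j))
      (mul_pos ht0 (centroid_emb_snd_pos hijB))
  obtain ⟨_, hqτ, q, hqB, rfl⟩ := exists_mem_fst_eq_of_mem_convexHull hyB hyτ hyj
  exact ⟨q.1, hqτ, (mem_filter.1 hqB).2⟩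
end
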